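/- arXiv:quant-ph/0606244 — 4 statements merged into one kernel-verified Lean document; each statement's English description precedes it below -/
import Mathlib

section
/- Let U₁,…,U_m (m ≥ 2) be unitaries on ℂ^s such that the bases U_t applied to the computational basis are pairwise mutually unbiased. Then the bases V_t = {U_t|k⟩ ⊗ U_t*|l⟩ : k,l ∈ [s]} of ℂ^s ⊗ ℂ^s are pairwise mutually unbiased, and the minimum over unit vectors ψ of (1/m) ∑_{t=1}^m H(V_t, ψ) equals (log d)/2, where d = s². -/
open scoped BigOperators

noncomputable section

/-- Inner product `⟪φ, ψ⟫ = ∑ i, conj (φ i) * ψ i` on `ι → ℂ`. -/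
def ip {ι : Type*} [Fintype ι] (φ ψ : ι → ℂ) : ℂ :=
  ∑ i, (starRingEnd ℂ) (φ i) * ψ i

/-- Shannon entropy of the outcome distribution of measuring `ψ` in the basis `B`. -/
def shannonH {ι κ : Type*} [Fintype ι] [Fintype κ] (B : κ → ι → ℂ) (ψ : ι → ℂ) : ℝ :=
  ∑ k, Real.negMulLog (‖ip (B k) ψ‖ ^ 2)

/-- The basis `{U|k⟩ ⊗ U*|l⟩ : k,l ∈ [s]}` of `ℂ^s ⊗ ℂ^s` obtained from the
unitary `U`; the `(k,l)`-th basis vector, as a function on `Fin s × Fin s`. -/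
def prodMUB {s : ℕ} (U : Matrix (Fin s) (Fin s) ℂ) :
    Fin s × Fin s → (Fin s × Fin s → ℂ) :=
  fun kl p => U p.1 kl.1 * (starRingEnd ℂ) (U p.2 kl.2)

open scoped Classical

namespace MUBaux
open Finset

variable {s : ℕ}

lemma unitary_col {U : Matrix (Fin s) (Fin s) ℂ}
    (hU : U ∈ Matrix.unitaryGroup (Fin s) ℂ) (k l : Fin s) :
    ∑ i, (starRingEnd ℂ) (U i k) * U i l = if k = l then 1 else 0 := by
  have h : (star U * U) k l = (1 : Matrix (Fin s) (Fin s) ℂ) k l := by rw [hU.1]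
  simpa [Matrix.mul_apply, Matrix.one_apply, Matrix.star_apply] using h

lemma unitary_row {U : Matrix (Fin s) (Fin s) ℂ}
    (hU : U ∈ Matrix.unitaryGroup (Fin s) ℂ) (i i' : Fin s) :
    ∑ k, U i k * (starRingEnd ℂ) (U i' k) = if i = i' then 1 else 0 := by
  have h : (U * star U) i i' = (1 : Matrix (Fin s) (Fin s) ℂ) i i' := by rw [hU.2]
  simpa [Matrix.mul_apply, Matrix.one_apply, Matrix.star_apply] using h

lemma ip_prodMUB (U V : Matrix (Fin s) (Fin s) ℂ) (a b : Fin s × Fin s) :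
    ip (prodMUB U a) (prodMUB V b)
      = (∑ i, (starRingEnd ℂ) (U i a.1) * V i b.1)
        * (starRingEnd ℂ) (∑ i, (starRingEnd ℂ) (U i a.2) * V i b.2) := by
  simp only [ip, prodMUB, map_sum, map_mul, RingHomCompTriple.comp_apply,
    Fintype.sum_prod_type, Finset.sum_mul_sum]
  congr 1; ext p1; congr 1; ext p2
  simp [Complex.conj_conj]
  ring

lemma prod_complete {U : Matrix (Fin s) (Fin s) ℂ}
    (hU : U ∈ Matrix.unitaryGroup (Fin s) ℂ) (p p' : Fin s × Fin s) :
    ∑ a : Fin s × Fin s, prodMUB U a p * (starRingEnd ℂ) (prodMUB U a p')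
      = if p = p' then 1 else 0 := by
  have h1 := unitary_row hU p.1 p'.1
  have h2 := unitary_row hU p'.2 p.2
  calc ∑ a : Fin s × Fin s, prodMUB U a p * (starRingEnd ℂ) (prodMUB U a p')
      = (∑ k, U p.1 k * (starRingEnd ℂ) (U p'.1 k))
        * (∑ l, U p'.2 l * (starRingEnd ℂ) (U p.2 l)) := by
        simp only [prodMUB, map_mul, RingHomCompTriple.comp_apply, Fintype.sum_prod_type,
          Finset.sum_mul_sum]
        congr 1; ext k; congr 1; ext l
        simp [Complex.conj_conj]; ring
    _ = (if p.1 = p'.1 then 1 else 0) * (if p'.2 = p.2 then 1 else 0) := by rw [h1, h2]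
    _ = if p = p' then 1 else 0 := by
        rcases p with ⟨p1, p2⟩; rcases p' with ⟨p1', p2'⟩
        simp [Prod.ext_iff, eq_comm, ite_and]
        split <;> simp_all

lemma conj_ip {ι : Type*} [Fintype ι] (φ ψ : ι → ℂ) :
    (starRingEnd ℂ) (ip φ ψ) = ip ψ φ := by
  simp only [ip, map_sum, map_mul, RingHomCompTriple.comp_apply, Complex.conj_conj]
  exact Finset.sum_congr rfl fun i _ => mul_comm _ _

/-- Expansion over a complete family. -/
lemma ip_expansion {ι κ : Type*} [Fintype ι] [DecidableEq ι] [Fintype κ] (W : κ → ι → ℂ)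
    (hW : ∀ p p', ∑ a, W a p * (starRingEnd ℂ) (W a p') = if p = p' then 1 else 0)
    (φ ψ : ι → ℂ) :
    ∑ a, ip φ (W a) * ip (W a) ψ = ip φ ψ := by
  have step : ∀ a, ip φ (W a) * ip (W a) ψ
      = ∑ p, ∑ p', (starRingEnd ℂ) (φ p) * ψ p' * (W a p * (starRingEnd ℂ) (W a p')) := by
    intro a
    simp only [ip, Finset.sum_mul_sum]
    congr 1; ext p; congr 1; ext p'
    ring
  calc ∑ a, ip φ (W a) * ip (W a) ψ
      = ∑ a, ∑ p, ∑ p', (starRingEnd ℂ) (φ p) * ψ p'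
          * (W a p * (starRingEnd ℂ) (W a p')) := Finset.sum_congr rfl fun a _ => step a
    _ = ∑ p, ∑ a, ∑ p', (starRingEnd ℂ) (φ p) * ψ p'
          * (W a p * (starRingEnd ℂ) (W a p')) := Finset.sum_comm
    _ = ∑ p, ∑ p', ∑ a, (starRingEnd ℂ) (φ p) * ψ p'
          * (W a p * (starRingEnd ℂ) (W a p')) :=
        Finset.sum_congr rfl fun p _ => Finset.sum_comm
    _ = ∑ p, ∑ p', (starRingEnd ℂ) (φ p) * ψ p' * (if p = p' then 1 else 0) := by
        refine Finset.sum_congr rfl fun p _ => Finset.sum_congr rfl fun p' _ => ?_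
        rw [← Finset.mul_sum, hW]
    _ = ip φ ψ := by
        simp [ip, mul_ite, mul_one, mul_zero, Finset.sum_ite_eq]

lemma parseval {ι κ : Type*} [Fintype ι] [DecidableEq ι] [Fintype κ] (W : κ → ι → ℂ)
    (hW : ∀ p p', ∑ a, W a p * (starRingEnd ℂ) (W a p') = if p = p' then 1 else 0)
    (ψ : ι → ℂ) :
    ∑ a, ‖ip (W a) ψ‖ ^ 2 = ∑ p, ‖ψ p‖ ^ 2 := by
  have key : ∑ a, ip ψ (W a) * ip (W a) ψ = ip ψ ψ := ip_expansion W hW ψ ψ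
  have h1 : ∀ a, ip ψ (W a) * ip (W a) ψ = ((‖ip (W a) ψ‖ ^ 2 : ℝ) : ℂ) := by
    intro a
    rw [← conj_ip]
    rw [Complex.conj_mul']
    norm_cast
  have h2 : ip ψ ψ = ((∑ p, ‖ψ p‖ ^ 2 : ℝ) : ℂ) := by
    rw [ip]
    push_cast
    exact Finset.sum_congr rfl fun p _ => Complex.conj_mul' _
  rw [Finset.sum_congr rfl fun a _ => h1 a, h2] at key
  exact_mod_cast key

lemma ip_prod_self {U : Matrix (Fin s) (Fin s) ℂ}
    (hU : U ∈ Matrix.unitaryGroup (Fin s) ℂ) (a b : Fin s × Fin s) :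
    ip (prodMUB U a) (prodMUB U b) = if a = b then 1 else 0 := by
  rw [ip_prodMUB, unitary_col hU, unitary_col hU]
  rcases a with ⟨a1, a2⟩; rcases b with ⟨b1, b2⟩
  simp only [Prod.ext_iff]
  by_cases h1 : a1 = b1 <;> by_cases h2 : a2 = b2 <;> simp [h1, h2]

lemma sum_pair_nonneg {m : ℕ} (hm : 2 ≤ m) (f : Fin m → ℝ)
    (h : ∀ t t', t ≠ t' → 0 ≤ f t + f t') : 0 ≤ ∑ t, f t := by
  by_cases hall : ∀ t, 0 ≤ f t
  · exact Finset.sum_nonneg fun t _ => hall t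
  push_neg at hall
  obtain ⟨t₀, ht₀⟩ := hall
  have hpos : ∀ t ∈ Finset.univ.erase t₀, -f t₀ ≤ f t := by
    intro t ht
    have := h t t₀ (Finset.ne_of_mem_erase ht)
    linarith
  have hsplit : ∑ t, f t = f t₀ + ∑ t ∈ Finset.univ.erase t₀, f t :=
    (Finset.add_sum_erase _ f (Finset.mem_univ t₀)).symm
  have hcard : (Finset.univ.erase t₀).card = m - 1 := by
    rw [Finset.card_erase_of_mem (Finset.mem_univ t₀), Finset.card_univ, Fintype.card_fin]
  have h2 : (Finset.univ.erase t₀).card • (-f t₀) ≤ ∑ t ∈ Finset.univ.erase t₀, f t :=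
    Finset.card_nsmul_le_sum _ _ _ hpos
  rw [hcard, nsmul_eq_mul] at h2
  have h3 : (1:ℝ) ≤ ((m-1 : ℕ) : ℝ) := by
    have : (1:ℕ) ≤ m - 1 := by omega
    exact_mod_cast this
  nlinarith [h2, h3, ht₀]

/-- The standard Riesz–Thorin auxiliary analytic family for a single coordinate. -/
def herm (v : ℂ) (e : ℝ) (z : ℂ) : ℂ :=
  if v = 0 then 0 else
    (v / (‖v‖ : ℂ)) * Complex.exp ((((e : ℝ) : ℂ) * (1 + z)) * ((Real.log ‖v‖ : ℝ) : ℂ))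

lemma herm_diff (v : ℂ) (e : ℝ) : Differentiable ℂ (herm v e) := by
  unfold herm
  by_cases h : v = 0
  · simp only [h, if_true]; exact differentiable_const 0
  · simp only [h, if_false]
    apply Differentiable.const_mul
    apply Complex.differentiable_exp.comp
    apply Differentiable.mul_const
    exact (differentiable_const _).mul ((differentiable_const _).add differentiable_id)

lemma herm_norm (v : ℂ) (e : ℝ) (z : ℂ) (he : 0 < e) (hz : -1 < z.re) :
    ‖herm v e z‖ = ‖v‖ ^ (e * (1 + z.re)) := by
  unfold herm
  by_cases h : v = 0
  · simp only [h, if_true, norm_zero, norm_zero]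
    rw [Real.zero_rpow (ne_of_gt (mul_pos he (show (0:ℝ) < 1 + z.re by linarith)))]
  · simp only [h, if_false, norm_mul]
    have hv : (0:ℝ) < ‖v‖ := norm_pos_iff.mpr h
    have h1 : ‖v / (‖v‖ : ℂ)‖ = 1 := by
      rw [norm_div, Complex.norm_real, Real.norm_eq_abs, abs_of_pos hv, div_self hv.ne']
    rw [h1, one_mul, Complex.norm_exp]
    have h2 : ((((e : ℝ) : ℂ) * (1 + z)) * ((Real.log ‖v‖ : ℝ) : ℂ)).re
        = e * (1 + z.re) * Real.log ‖v‖ := by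
      simp [Complex.mul_re, Complex.ofReal_re, Complex.ofReal_im, Complex.add_re,
        Complex.one_re, Complex.add_im, Complex.one_im]
    rw [h2, Real.rpow_def_of_pos hv]
    ring_nf

lemma herm_at_real (v : ℂ) (e : ℝ) (t : ℝ) (h : e * (1 + t) = 1) :
    herm v e (t : ℂ) = v := by
  unfold herm
  by_cases hv : v = 0
  · simp [hv]
  · simp only [hv, if_false]
    have hv' : (0:ℝ) < ‖v‖ := norm_pos_iff.mpr hv
    have key : (((e : ℝ) : ℂ) * (1 + (t:ℂ))) * ((Real.log ‖v‖ : ℝ) : ℂ)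
        = ((Real.log ‖v‖ : ℝ) : ℂ) := by
      have h2 : ((e : ℝ) : ℂ) * (1 + (t:ℂ)) = 1 := by
        calc ((e : ℝ) : ℂ) * (1 + (t:ℂ)) = ((e * (1 + t) : ℝ) : ℂ) := by push_cast; ring
          _ = 1 := by rw [h]; norm_num
      rw [h2, one_mul]
    rw [key, ← Complex.ofReal_exp, Real.exp_log hv']
    exact div_mul_cancel₀ v (by exact_mod_cast hv'.ne')

lemma herm_norm_bound (v : ℂ) (e : ℝ) (z : ℂ) (he : 0 < e) (hz0 : 0 ≤ z.re) (hz1 : z.re ≤ 1) :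
    ‖herm v e z‖ ≤ ‖v‖ ^ e + ‖v‖ ^ (e * 2) := by
  rw [herm_norm v e z he (by linarith)]
  rcases le_or_gt ‖v‖ 1 with hv | hv
  · rcases eq_or_lt_of_le (norm_nonneg v) with hv0 | hv0
    · rw [← hv0]
      rw [Real.zero_rpow (by positivity), Real.zero_rpow (by positivity)]
      norm_num
      exact Real.rpow_nonneg le_rfl _
    · have : ‖v‖ ^ (e * (1 + z.re)) ≤ ‖v‖ ^ e := by
        apply Real.rpow_le_rpow_of_exponent_ge hv0 hv
        nlinarith
      have h2 : (0:ℝ) ≤ ‖v‖ ^ (e * 2) := Real.rpow_nonneg (norm_nonneg v) _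
      linarith
  · have : ‖v‖ ^ (e * (1 + z.re)) ≤ ‖v‖ ^ (e * 2) := by
      apply Real.rpow_le_rpow_of_exponent_le hv.le
      nlinarith
    have h2 : (0:ℝ) ≤ ‖v‖ ^ e := Real.rpow_nonneg (norm_nonneg v) _
    linarith

lemma rpow_sq {t e : ℝ} (ht : 0 ≤ t) : (t ^ e) ^ (2:ℕ) = t ^ (e * 2) := by
  rw [← Real.rpow_natCast (t ^ e) 2, ← Real.rpow_mul ht]
  norm_num

lemma cs_sum {ι : Type*} [Fintype ι] (f g : ι → ℝ)
    (hf : ∀ i, 0 ≤ f i) (hg : ∀ i, 0 ≤ g i) :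
    ∑ i, f i * g i ≤ Real.sqrt (∑ i, f i ^ 2) * Real.sqrt (∑ i, g i ^ 2) := by
  have h := Finset.sum_mul_sq_le_sq_mul_sq Finset.univ f g
  have h0 : 0 ≤ ∑ i, f i * g i :=
    Finset.sum_nonneg fun i _ => mul_nonneg (hf i) (hg i)
  have h2 := Real.sqrt_le_sqrt h
  rwa [Real.sqrt_sq h0, Real.sqrt_mul (by positivity)] at h2

set_option maxHeartbeats 1000000 in
/-- Finite Riesz–Thorin interpolation step, normalized form. -/
theorem rt_step {ι : Type*} [Fintype ι] (M : ι → ι → ℂ) (c θ : ℝ)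
    (hc : 0 < c) (hθ0 : 0 < θ) (hθ1 : θ < 1)
    (hM2 : ∀ v : ι → ℂ, ∑ i, ‖∑ j, M i j * v j‖ ^ 2 ≤ ∑ j, ‖v j‖ ^ 2)
    (hMc : ∀ i j, ‖M i j‖ ≤ c)
    (x : ι → ℂ) (hxp : ∑ j, ‖x j‖ ^ ((2:ℝ)/(1+θ)) = 1) :
    (∑ i, ‖∑ j, M i j * x j‖ ^ ((2:ℝ)/(1-θ))) ^ ((1-θ)/2) ≤ c ^ θ := by
  have h1θ : (0:ℝ) < 1 + θ := by linarith
  have h1θ' : (0:ℝ) < 1 - θ := by linarith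
  set p : ℝ := 2/(1+θ) with hp
  set q : ℝ := 2/(1-θ) with hq
  have hp0 : 0 < p := by positivity
  have hq0 : 0 < q := by positivity
  have hpmul : p * (1+θ) = 2 := by rw [hp]; field_simp
  have hqmul : q * (1-θ) = 2 := by rw [hq]; field_simp
  have hq2 : 2 < q := by nlinarith
  have id1 : p/2 * (1+θ) = 1 := by nlinarith
  have id2 : (q-1)*p = q := by
    rw [hp, hq]; field_simp; ring
  have idpq : 1 - 1/p = 1/q := by rw [hp, hq]; field_simp; ring
  have idq : (1-θ)/2 = 1/q := by rw [hq]; field_simp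
  set y : ι → ℂ := fun i => ∑ j, M i j * x j with hy
  set Q : ℝ := ∑ i, ‖y i‖ ^ q with hQ
  have hQnonneg : 0 ≤ Q := Finset.sum_nonneg fun i _ => Real.rpow_nonneg (norm_nonneg _) _
  by_cases hy0 : ∀ i, y i = 0
  · have hQ0 : Q = 0 := by
      rw [hQ]
      refine Finset.sum_eq_zero fun i _ => ?_
      rw [hy0 i, norm_zero, Real.zero_rpow (ne_of_gt hq0)]
    rw [hQ0, Real.zero_rpow (ne_of_gt (show (0:ℝ) < (1-θ)/2 by linarith))]
    positivity
  push_neg at hy0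
  obtain ⟨i₀, hi₀⟩ := hy0
  have hQpos : 0 < Q := by
    have h1 : 0 < ‖y i₀‖ ^ q := Real.rpow_pos_of_pos (norm_pos_iff.mpr hi₀) q
    have h2 : ‖y i₀‖ ^ q ≤ Q :=
      Finset.single_le_sum (fun i _ => Real.rpow_nonneg (norm_nonneg _) _) (Finset.mem_univ i₀)
    linarith
  -- dual vector
  set β : ι → ℂ := fun l =>
    (starRingEnd ℂ) (y l) * (((‖y l‖ ^ (q-(2:ℝ))) / Q ^ (1/p) : ℝ) : ℂ) with hβ
  have hQp : (0:ℝ) < Q ^ (1/p) := Real.rpow_pos_of_pos hQpos _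
  have hβnorm : ∀ l, ‖β l‖ = ‖y l‖ ^ (q-1) / Q ^ (1/p) := by
    intro l
    rw [hβ]
    simp only [norm_mul, RingHomIsometric.norm_map, Complex.norm_real, Real.norm_eq_abs]
    by_cases hyl : y l = 0
    · rw [hyl, norm_zero, Real.zero_rpow (ne_of_gt (show (0:ℝ) < q - 2 by linarith)),
        Real.zero_rpow (ne_of_gt (show (0:ℝ) < q - 1 by linarith))]
      simp
    · have hpos : 0 < ‖y l‖ := norm_pos_iff.mpr hyl
      have habs : |‖y l‖ ^ (q-(2:ℝ)) / Q ^ (1/p)| = ‖y l‖ ^ (q-(2:ℝ)) / Q ^ (1/p) :=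
        abs_of_nonneg (div_nonneg (Real.rpow_nonneg (norm_nonneg _) _) hQp.le)
      rw [habs, mul_div_assoc']
      congr 1
      rw [show q - 1 = 1 + (q-2) by ring, Real.rpow_add hpos, Real.rpow_one]
  have hβp : ∑ l, ‖β l‖ ^ p = 1 := by
    have hterm : ∀ l, ‖β l‖ ^ p = ‖y l‖ ^ q / Q := by
      intro l
      rw [hβnorm l, Real.div_rpow (Real.rpow_nonneg (norm_nonneg _) _) hQp.le,
        ← Real.rpow_mul (norm_nonneg _), id2, ← Real.rpow_mul hQnonneg,
        one_div, inv_mul_cancel₀ (ne_of_gt hp0), Real.rpow_one]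
    rw [Finset.sum_congr rfl fun l _ => hterm l, ← Finset.sum_div, ← hQ,
      div_self (ne_of_gt hQpos)]
  have hβy : ∑ l, β l * y l = ((Q ^ (1/q : ℝ) : ℝ) : ℂ) := by
    have hterm : ∀ l, β l * y l = ((‖y l‖ ^ q / Q ^ (1/p) : ℝ) : ℂ) := by
      intro l
      rw [hβ]
      by_cases hyl : y l = 0
      · rw [hyl]
        simp only [map_zero, zero_mul, mul_zero]
        rw [norm_zero, Real.zero_rpow (ne_of_gt hq0)]
        norm_num
      · have hpos : 0 < ‖y l‖ := norm_pos_iff.mpr hyl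
        have hre : (starRingEnd ℂ) (y l) * (((‖y l‖ ^ (q-(2:ℝ))) / Q ^ (1/p) : ℝ) : ℂ) * y l
            = ((starRingEnd ℂ) (y l) * y l) * (((‖y l‖ ^ (q-(2:ℝ))) / Q ^ (1/p) : ℝ) : ℂ) := by
          ring
        rw [hre, Complex.conj_mul']
        rw [show ((‖y l‖:ℂ) ^ (2:ℕ)) = (((‖y l‖^(2:ℕ) : ℝ)) : ℂ) by push_cast; ring]
        rw [← Complex.ofReal_mul]
        congr 1
        rw [mul_div_assoc']
        congr 1
        rw [← Real.rpow_natCast ‖y l‖ 2, ← Real.rpow_add hpos]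
        congr 1
        push_cast
        ring
    have hcast : ∑ l, ((‖y l‖ ^ q / Q ^ (1/p) : ℝ) : ℂ)
        = ((∑ l, ‖y l‖ ^ q / Q ^ (1/p) : ℝ) : ℂ) := by norm_cast
    rw [Finset.sum_congr rfl fun l _ => hterm l, hcast]
    congr 1
    rw [← Finset.sum_div, ← hQ, ← idpq, Real.rpow_sub hQpos, Real.rpow_one]
  -- the analytic family
  set A : ι → ℂ → ℂ := fun k => herm (x k) (p/2) with hA
  set B : ι → ℂ → ℂ := fun l => herm (β l) (p/2) with hB
  set F : ℂ → ℂ := fun z => ∑ l, B l z * ∑ k, M l k * A k z with hF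
  have hp20 : 0 < p/2 := by positivity
  have hFdiff : Differentiable ℂ F := by
    apply Differentiable.fun_sum
    intro l _
    exact (herm_diff _ _).mul (Differentiable.fun_sum fun k _ =>
      (differentiable_const _).mul (herm_diff _ _))
  -- pointwise norm bound on the strip
  have hFbound : ∀ z : ℂ, 0 ≤ z.re → z.re ≤ 1 →
      ‖F z‖ ≤ (∑ l, (‖β l‖ ^ (p/2) + ‖β l‖ ^ (p/2*2)))
        * (c * ∑ k, (‖x k‖ ^ (p/2) + ‖x k‖ ^ (p/2*2))) := by
    intro z hz0 hz1
    have h1 : ‖F z‖ ≤ ∑ l, ‖B l z‖ * ‖∑ k, M l k * A k z‖ := by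
      refine (norm_sum_le _ _).trans ?_
      refine Finset.sum_le_sum fun l _ => ?_
      rw [norm_mul]
    refine h1.trans ?_
    have h2 : ∀ l, ‖B l z‖ * ‖∑ k, M l k * A k z‖
        ≤ (‖β l‖ ^ (p/2) + ‖β l‖ ^ (p/2*2)) * (c * ∑ k, (‖x k‖ ^ (p/2) + ‖x k‖ ^ (p/2*2))) := by
      intro l
      apply mul_le_mul
      · exact herm_norm_bound _ _ _ hp20 hz0 hz1
      · refine (norm_sum_le _ _).trans ?_
        rw [Finset.mul_sum]
        refine Finset.sum_le_sum fun k _ => ?_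
        rw [norm_mul]
        exact mul_le_mul (hMc l k) (herm_norm_bound _ _ _ hp20 hz0 hz1) (norm_nonneg _)
          hc.le
      · exact norm_nonneg _
      · positivity
    calc ∑ l, ‖B l z‖ * ‖∑ k, M l k * A k z‖
        ≤ ∑ l, (‖β l‖ ^ (p/2) + ‖β l‖ ^ (p/2*2))
            * (c * ∑ k, (‖x k‖ ^ (p/2) + ‖x k‖ ^ (p/2*2))) :=
          Finset.sum_le_sum fun l _ => h2 l
      _ = _ := by rw [← Finset.sum_mul]
  -- boundary: Re z = 0
  have hbd0 : ∀ z : ℂ, z.re = 0 → ‖F z‖ ≤ 1 := by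
    intro z hz
    have hnB : ∀ l, ‖B l z‖ = ‖β l‖ ^ (p/2) := by
      intro l
      rw [hB, herm_norm _ _ _ hp20 (by rw [hz]; norm_num)]
      rw [hz]; norm_num
    have hnA : ∀ k, ‖A k z‖ = ‖x k‖ ^ (p/2) := by
      intro k
      rw [hA, herm_norm _ _ _ hp20 (by rw [hz]; norm_num)]
      rw [hz]; norm_num
    have h1 : ‖F z‖ ≤ ∑ l, ‖B l z‖ * ‖∑ k, M l k * A k z‖ := by
      refine (norm_sum_le _ _).trans ?_
      exact Finset.sum_le_sum fun l _ => le_of_eq (norm_mul _ _)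
    refine h1.trans ?_
    have hcs := cs_sum (fun l => ‖B l z‖) (fun l => ‖∑ k, M l k * A k z‖)
      (fun l => norm_nonneg _) (fun l => norm_nonneg _)
    refine hcs.trans ?_
    have hB2 : ∑ l, ‖B l z‖ ^ 2 = 1 := by
      rw [Finset.sum_congr rfl fun l _ => by rw [hnB l, rpow_sq (norm_nonneg _)]]
      rw [show p/2*2 = p by ring]
      exact hβp
    have hA2 : ∑ l, ‖∑ k, M l k * A k z‖ ^ 2 ≤ 1 := by
      refine (hM2 (fun k => A k z)).trans ?_
      rw [Finset.sum_congr rfl fun k _ => by rw [hnA k, rpow_sq (norm_nonneg _)]]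
      rw [show p/2*2 = p by ring]
      exact le_of_eq hxp
    rw [hB2, Real.sqrt_one, one_mul]
    calc Real.sqrt (∑ l, ‖∑ k, M l k * A k z‖ ^ 2) ≤ Real.sqrt 1 := Real.sqrt_le_sqrt hA2
      _ = 1 := Real.sqrt_one
  -- boundary: Re z = 1
  have hbd1 : ∀ z : ℂ, z.re = 1 → ‖F z‖ ≤ c := by
    intro z hz
    have hnB : ∀ l, ‖B l z‖ = ‖β l‖ ^ p := by
      intro l
      rw [hB, herm_norm _ _ _ hp20 (by rw [hz]; norm_num), hz]
      norm_num
    have hnA : ∀ k, ‖A k z‖ = ‖x k‖ ^ p := by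
      intro k
      rw [hA, herm_norm _ _ _ hp20 (by rw [hz]; norm_num), hz]
      norm_num
    have h1 : ‖F z‖ ≤ ∑ l, ‖B l z‖ * ‖∑ k, M l k * A k z‖ := by
      refine (norm_sum_le _ _).trans ?_
      exact Finset.sum_le_sum fun l _ => le_of_eq (norm_mul _ _)
    refine h1.trans ?_
    have h2 : ∀ l, ‖B l z‖ * ‖∑ k, M l k * A k z‖ ≤ ‖β l‖ ^ p * c := by
      intro l
      rw [hnB l]
      refine mul_le_mul_of_nonneg_left ?_ (Real.rpow_nonneg (norm_nonneg _) _)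
      refine (norm_sum_le _ _).trans ?_
      calc ∑ k, ‖M l k * A k z‖ ≤ ∑ k, c * ‖x k‖ ^ p := by
            refine Finset.sum_le_sum fun k _ => ?_
            rw [norm_mul, hnA k]
            exact mul_le_mul_of_nonneg_right (hMc l k) (Real.rpow_nonneg (norm_nonneg _) _)
        _ = c := by rw [← Finset.mul_sum, hxp, mul_one]
    calc ∑ l, ‖B l z‖ * ‖∑ k, M l k * A k z‖ ≤ ∑ l, ‖β l‖ ^ p * c :=
          Finset.sum_le_sum fun l _ => h2 l
      _ = c := by rw [← Finset.sum_mul, hβp, one_mul]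
  -- Hadamard three lines
  have hmem : (θ : ℂ) ∈ Complex.HadamardThreeLines.verticalClosedStrip 0 1 := by
    simp only [Complex.HadamardThreeLines.verticalClosedStrip, Set.mem_preimage,
      Complex.ofReal_re, Set.mem_Icc]
    constructor <;> linarith
  have hdiffcl : DiffContOnCl ℂ F (Complex.HadamardThreeLines.verticalStrip 0 1) :=
    hFdiff.diffContOnCl
  have hbdd : BddAbove ((norm ∘ F) '' Complex.HadamardThreeLines.verticalClosedStrip 0 1) := by
    refine ⟨(∑ l, (‖β l‖ ^ (p/2) + ‖β l‖ ^ (p/2*2)))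
        * (c * ∑ k, (‖x k‖ ^ (p/2) + ‖x k‖ ^ (p/2*2))), ?_⟩
    rintro w ⟨z, hz, rfl⟩
    exact hFbound z hz.1 hz.2
  have hHad := Complex.HadamardThreeLines.norm_le_interp_of_mem_verticalClosedStrip'
    (f := F) zero_lt_one hmem hdiffcl hbdd (fun z hz => hbd0 z hz) (fun z hz => hbd1 z hz)
  -- evaluate F at θ
  have hFθ : F (θ : ℂ) = ((Q ^ (1/q : ℝ) : ℝ) : ℂ) := by
    rw [hF]
    simp only
    have hAθ : ∀ k, A k (θ:ℂ) = x k := fun k => herm_at_real _ _ _ id1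
    have hBθ : ∀ l, B l (θ:ℂ) = β l := fun l => herm_at_real _ _ _ id1
    rw [Finset.sum_congr rfl fun l _ => by rw [hBθ l,
      Finset.sum_congr rfl fun k _ => by rw [hAθ k]]]
    exact hβy
  have hnormFθ : ‖F (θ:ℂ)‖ = Q ^ (1/q : ℝ) := by
    rw [hFθ, Complex.norm_real, Real.norm_eq_abs, abs_of_nonneg (Real.rpow_nonneg hQnonneg _)]
  rw [hnormFθ, Complex.ofReal_re, Real.one_rpow, one_mul] at hHad
  rw [idq]
  rw [sub_zero, sub_zero, div_one] at hHad
  exact hHad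

lemma l2_of_cols {ι : Type*} [Fintype ι] [DecidableEq ι] (M : ι → ι → ℂ)
    (hcol : ∀ b b', ∑ a, (starRingEnd ℂ) (M a b) * M a b' = if b = b' then 1 else 0)
    (v : ι → ℂ) :
    ∑ a, ‖∑ b, M a b * v b‖ ^ 2 = ∑ b, ‖v b‖ ^ 2 := by
  have key : ∑ a, ((‖∑ b, M a b * v b‖^2 : ℝ) : ℂ) = ((∑ b, ‖v b‖^2 : ℝ) : ℂ) := by
    calc ∑ a, ((‖∑ b, M a b * v b‖^2 : ℝ) : ℂ)
        = ∑ a, (starRingEnd ℂ) (∑ b, M a b * v b) * (∑ b, M a b * v b) := by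
          refine Finset.sum_congr rfl fun a _ => ?_
          rw [Complex.conj_mul']
          push_cast; ring
      _ = ∑ a, ∑ b, ∑ b', (starRingEnd ℂ) (v b) * v b'
            * ((starRingEnd ℂ) (M a b) * M a b') := by
          refine Finset.sum_congr rfl fun a _ => ?_
          rw [map_sum, Finset.sum_mul_sum]
          refine Finset.sum_congr rfl fun b _ => Finset.sum_congr rfl fun b' _ => ?_
          rw [map_mul]; ring
      _ = ∑ b, ∑ b', (starRingEnd ℂ) (v b) * v b'
            * ∑ a, ((starRingEnd ℂ) (M a b) * M a b') := by
          rw [Finset.sum_comm]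
          refine Finset.sum_congr rfl fun b _ => ?_
          rw [Finset.sum_comm]
          refine Finset.sum_congr rfl fun b' _ => ?_
          rw [← Finset.mul_sum]
      _ = ∑ b, (starRingEnd ℂ) (v b) * v b := by
          refine Finset.sum_congr rfl fun b _ => ?_
          rw [Finset.sum_congr rfl fun b' _ => by rw [hcol b b']]
          simp [mul_ite, mul_one, mul_zero, Finset.sum_ite_eq]
      _ = ((∑ b, ‖v b‖^2 : ℝ) : ℂ) := by
          push_cast
          exact Finset.sum_congr rfl fun b _ => Complex.conj_mul' _
  exact_mod_cast key

lemma jensen_log_rpow {ι : Type*} [Fintype ι] (r : ι → ℝ) (hr : ∀ i, 0 ≤ r i)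
    (hr1 : ∑ i, r i = 1) (α : ℝ) (hα : 1 < α) :
    (α - 1) * ∑ i, r i * Real.log (r i) ≤ Real.log (∑ i, r i ^ α) := by
  have hAM := Real.geom_mean_le_arith_mean_weighted Finset.univ r (fun i => r i ^ (α-1))
    (fun i _ => hr i) hr1 (fun i _ => Real.rpow_nonneg (hr i) _)
  have hRHS : ∑ i, r i * r i ^ (α-1) = ∑ i, r i ^ α := by
    refine Finset.sum_congr rfl fun i _ => ?_
    rcases eq_or_lt_of_le (hr i) with h0 | h0
    · rw [← h0, Real.zero_rpow (by linarith), mul_zero,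
        Real.zero_rpow (by linarith)]
    · rw [show α = 1 + (α - 1) by ring, Real.rpow_add h0, Real.rpow_one]
      ring_nf
  rw [hRHS] at hAM
  have hfac : ∀ i, (0:ℝ) < (r i ^ (α-1)) ^ (r i) := by
    intro i
    rcases eq_or_lt_of_le (hr i) with h0 | h0
    · rw [← h0, Real.rpow_zero]; norm_num
    · exact Real.rpow_pos_of_pos (Real.rpow_pos_of_pos h0 _) _
  have hprodpos : 0 < ∏ i, (r i ^ (α-1)) ^ (r i) := Finset.prod_pos fun i _ => hfac i
  have hsumpos : 0 < ∑ i, r i ^ α := lt_of_lt_of_le hprodpos hAM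
  have hlog := Real.log_le_log hprodpos hAM
  rw [Real.log_prod (fun i _ => (hfac i).ne')] at hlog
  have hterm : ∀ i, Real.log ((r i ^ (α-1)) ^ (r i)) = (α-1) * (r i * Real.log (r i)) := by
    intro i
    rcases eq_or_lt_of_le (hr i) with h0 | h0
    · rw [← h0, Real.rpow_zero, Real.log_one]; ring
    · rw [Real.log_rpow (Real.rpow_pos_of_pos h0 _), Real.log_rpow h0]
      ring
  rw [Finset.sum_congr rfl fun i _ => hterm i, ← Finset.mul_sum] at hlog
  exact hlog

lemma tendsto_log_sum_rpow {ι : Type*} [Fintype ι] (w : ι → ℝ) (hw : ∀ i, 0 ≤ w i)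
    (hw1 : ∑ i, w i = 1) :
    Filter.Tendsto (fun β : ℝ => Real.log (∑ i, w i ^ β) / (1 - β))
      (nhdsWithin 1 (Set.Iio 1)) (nhds (∑ i, Real.negMulLog (w i))) := by
  have hS : HasDerivAt (fun β : ℝ => ∑ i, w i ^ β) (∑ i, w i * Real.log (w i)) 1 := by
    apply HasDerivAt.fun_sum
    intro i _
    rcases eq_or_lt_of_le (hw i) with h0 | h0
    · have hev : (fun β : ℝ => w i ^ β) =ᶠ[nhds (1:ℝ)] fun _ => (0:ℝ) := by
        filter_upwards [eventually_ne_nhds (show (1:ℝ) ≠ 0 by norm_num)] with β hβ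
        rw [← h0, Real.zero_rpow hβ]
      have h00 : w i * Real.log (w i) = 0 := by rw [← h0]; simp
      rw [h00]
      exact (hasDerivAt_const (1:ℝ) (0:ℝ)).congr_of_eventuallyEq hev
    · have := (Real.hasStrictDerivAt_const_rpow h0 1).hasDerivAt
      simpa [Real.rpow_one] using this
  have hSne : (∑ i, w i ^ (1:ℝ)) ≠ 0 := by
    rw [Finset.sum_congr rfl fun i _ => Real.rpow_one (w i), hw1]
    norm_num
  have hG : HasDerivAt (fun β : ℝ => Real.log (∑ i, w i ^ β))
      ((∑ i, w i * Real.log (w i)) / (∑ i, w i ^ (1:ℝ))) 1 := hS.log hSne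
  have hG1 : (∑ i, w i * Real.log (w i)) / (∑ i, w i ^ (1:ℝ))
      = ∑ i, w i * Real.log (w i) := by
    rw [Finset.sum_congr rfl fun i _ => Real.rpow_one (w i), hw1, div_one]
  rw [hG1] at hG
  set G : ℝ → ℝ := fun β => Real.log (∑ i, w i ^ β) with hGdef
  have hG0 : G 1 = 0 := by
    rw [hGdef]
    simp only
    rw [Finset.sum_congr rfl fun i _ => Real.rpow_one (w i), hw1, Real.log_one]
  have hslope := hasDerivAt_iff_tendsto_slope.mp hG
  have hmono : nhdsWithin (1:ℝ) (Set.Iio 1) ≤ nhdsWithin 1 {(1:ℝ)}ᶜ :=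
    nhdsWithin_mono 1 (fun x hx => ne_of_lt hx)
  have h2 : Filter.Tendsto (fun β => -slope G 1 β) (nhdsWithin 1 (Set.Iio 1))
      (nhds (-(∑ i, w i * Real.log (w i)))) :=
    ((hslope.mono_left hmono).neg)
  have heq : (fun β : ℝ => Real.log (∑ i, w i ^ β) / (1 - β))
      =ᶠ[nhdsWithin (1:ℝ) (Set.Iio 1)] (fun β => -slope G 1 β) := by
    filter_upwards [self_mem_nhdsWithin] with β hβ
    have hβ1 : β ≠ 1 := ne_of_lt hβ
    rw [slope_def_field, hG0, sub_zero, show β - 1 = -(1 - β) by ring, div_neg, neg_neg]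
  have hHval : -(∑ i, w i * Real.log (w i)) = ∑ i, Real.negMulLog (w i) := by
    rw [← Finset.sum_neg_distrib]
    exact Finset.sum_congr rfl fun i _ => by rw [Real.negMulLog]; ring
  rw [← hHval]
  exact Filter.Tendsto.congr' heq.symm h2

/-- Maassen–Uffink entropic uncertainty (finite, pure-state form). -/
theorem entropy_pair {ι : Type*} [Fintype ι] [DecidableEq ι] [Nonempty ι]
    (M : ι → ι → ℂ) (c : ℝ) (hc : 0 < c)
    (hcol : ∀ b b', ∑ a, (starRingEnd ℂ) (M a b) * M a b' = if b = b' then 1 else 0)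
    (hMc : ∀ a b, ‖M a b‖ ≤ c)
    (x : ι → ℂ) (hx : ∑ b, ‖x b‖ ^ 2 = 1) :
    (-2) * Real.log c
      ≤ (∑ b, Real.negMulLog (‖x b‖ ^ 2)) + ∑ a, Real.negMulLog (‖∑ b, M a b * x b‖ ^ 2) := by
  set y : ι → ℂ := fun a => ∑ b, M a b * x b with hy
  have hl2 : ∀ v : ι → ℂ, ∑ a, ‖∑ b, M a b * v b‖ ^ 2 = ∑ b, ‖v b‖ ^ 2 := l2_of_cols M hcol
  have hy2 : ∑ a, ‖y a‖ ^ 2 = 1 := by rw [hy]; rw [hl2 x, hx]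
  set w : ι → ℝ := fun b => ‖x b‖ ^ 2 with hw
  set r : ι → ℝ := fun a => ‖y a‖ ^ 2 with hr
  have hwnn : ∀ b, 0 ≤ w b := fun b => by positivity
  have hrnn : ∀ a, 0 ≤ r a := fun a => by positivity
  set Hr : ℝ := ∑ a, Real.negMulLog (r a) with hHr
  -- key inequality for β close to 1 from below
  have key : ∀ β : ℝ, β ∈ Set.Ioo (1/2 : ℝ) 1 →
      -Hr - 2 * Real.log c ≤ Real.log (∑ b, w b ^ β) / (1 - β) := by
    intro β hβ
    obtain ⟨hβl, hβu⟩ := hβ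
    set θ : ℝ := 1/β - 1 with hθdef
    have hβ0 : 0 < β := by linarith
    have hθ0 : 0 < θ := by
      rw [hθdef]
      have : 1 < 1/β := by rw [lt_div_iff₀ hβ0]; linarith
      linarith
    have hθ1 : θ < 1 := by
      rw [hθdef]
      have : 1/β < 2 := by rw [div_lt_iff₀ hβ0]; linarith
      linarith
    have h1θ : 1 + θ = 1/β := by rw [hθdef]; ring
    have hpβ : (2:ℝ)/(1+θ) = 2*β := by rw [h1θ]; field_simp
    set p : ℝ := 2/(1+θ) with hpdef
    set q : ℝ := 2/(1-θ) with hqdef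
    set α : ℝ := q/2 with hαdef
    have h1θ' : (0:ℝ) < 1 - θ := by linarith
    have hq0 : 0 < q := by positivity
    have hαval : α = 1/(1-θ) := by
      rw [hαdef, hqdef]
      field_simp
      try ring
    have hα1 : 1 < α := by
      rw [hαval, lt_div_iff₀ h1θ', one_mul]
      linarith
    have hxq : ∀ b, ‖x b‖ ^ p = w b ^ β := by
      intro b
      rw [hw]
      simp only
      rw [← Real.rpow_natCast ‖x b‖ 2, ← Real.rpow_mul (norm_nonneg _), hpβ]
      norm_num
    have hyq : ∀ a, ‖y a‖ ^ q = r a ^ α := by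
      intro a
      rw [hr]
      simp only
      rw [← Real.rpow_natCast ‖y a‖ 2, ← Real.rpow_mul (norm_nonneg _), hαdef]
      norm_num
      congr 1
      ring
    set S : ℝ := ∑ b, w b ^ β with hSdef
    set Sr : ℝ := ∑ a, r a ^ α with hSrdef
    -- positivity of S and Sr
    obtain ⟨b₀, hb₀⟩ : ∃ b, 0 < w b := by
      by_contra hno
      push_neg at hno
      have : ∑ b, w b = 0 := le_antisymm (Finset.sum_nonpos fun b _ => hno b)
        (Finset.sum_nonneg fun b _ => hwnn b)
      rw [hw] at this
      simp only at this
      rw [hx] at this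
      norm_num at this
    obtain ⟨a₀, ha₀⟩ : ∃ a, 0 < r a := by
      by_contra hno
      push_neg at hno
      have : ∑ a, r a = 0 := le_antisymm (Finset.sum_nonpos fun a _ => hno a)
        (Finset.sum_nonneg fun a _ => hrnn a)
      rw [hr] at this
      simp only at this
      rw [hy2] at this
      norm_num at this
    have hSpos : 0 < S := by
      have h1 : 0 < w b₀ ^ β := Real.rpow_pos_of_pos hb₀ _
      have h2 : w b₀ ^ β ≤ S :=
        Finset.single_le_sum (fun b _ => Real.rpow_nonneg (hwnn b) _) (Finset.mem_univ b₀)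
      linarith
    have hSrpos : 0 < Sr := by
      have h1 : 0 < r a₀ ^ α := Real.rpow_pos_of_pos ha₀ _
      have h2 : r a₀ ^ α ≤ Sr :=
        Finset.single_le_sum (fun a _ => Real.rpow_nonneg (hrnn a) _) (Finset.mem_univ a₀)
      linarith
    have hp0 : 0 < p := by rw [hpβ]; linarith
    set N : ℝ := S ^ (1/p) with hNdef
    have hNpos : 0 < N := Real.rpow_pos_of_pos hSpos _
    -- normalized vector
    set x' : ι → ℂ := fun b => x b * ((N⁻¹ : ℝ) : ℂ) with hx'def
    have hx'p : ∑ b, ‖x' b‖ ^ p = 1 := by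
      have hterm : ∀ b, ‖x' b‖ ^ p = ‖x b‖ ^ p * (N⁻¹) ^ p := by
        intro b
        rw [hx'def]
        simp only [norm_mul, Complex.norm_real, Real.norm_eq_abs,
          abs_of_nonneg (inv_nonneg.mpr hNpos.le)]
        rw [Real.mul_rpow (norm_nonneg _) (inv_nonneg.mpr hNpos.le)]
      have hNp : (N⁻¹ : ℝ) ^ p = S⁻¹ := by
        rw [hNdef, ← Real.rpow_neg hSpos.le, ← Real.rpow_mul hSpos.le,
          show -(1/p)*p = -1 by field_simp, Real.rpow_neg_one]
      rw [Finset.sum_congr rfl fun b _ => hterm b, ← Finset.sum_mul,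
        Finset.sum_congr rfl fun b _ => hxq b, ← hSdef, hNp,
        mul_inv_cancel₀ hSpos.ne']
    have hrt := rt_step M c θ hc hθ0 hθ1 (fun v => le_of_eq (hl2 v)) hMc x' hx'p
    rw [← hqdef] at hrt
    have hy'q : ∀ a, ‖∑ b, M a b * x' b‖ ^ q = r a ^ α * (N⁻¹) ^ q := by
      intro a
      have hsum : ∑ b, M a b * x' b = (∑ b, M a b * x b) * ((N⁻¹ : ℝ) : ℂ) := by
        rw [hx'def, Finset.sum_mul]
        exact Finset.sum_congr rfl fun b _ => by ring
      rw [hsum, norm_mul, Complex.norm_real, Real.norm_eq_abs,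
        abs_of_nonneg (inv_nonneg.mpr hNpos.le),
        Real.mul_rpow (norm_nonneg _) (inv_nonneg.mpr hNpos.le)]
      congr 1
      exact hyq a
    rw [Finset.sum_congr rfl fun a _ => hy'q a, ← Finset.sum_mul, ← hSrdef] at hrt
    have hq1 : q * ((1-θ)/2) = 1 := by rw [hqdef]; field_simp
    have hNq : ((N⁻¹ : ℝ) ^ q) ^ ((1-θ)/2) = N⁻¹ := by
      rw [← Real.rpow_mul (inv_nonneg.mpr hNpos.le), hq1, Real.rpow_one]
    rw [Real.mul_rpow hSrpos.le (Real.rpow_nonneg (inv_nonneg.mpr hNpos.le) _), hNq] at hrt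
    -- hrt : Sr ^ ((1-θ)/2) * N⁻¹ ≤ c ^ θ
    have hrt2 : Sr ^ ((1-θ)/2) ≤ c ^ θ * N := by
      have h1 := mul_le_mul_of_nonneg_right hrt hNpos.le
      have h2 : Sr ^ ((1-θ)/2) * N⁻¹ * N = Sr ^ ((1-θ)/2) := by
        field_simp
      rwa [h2] at h1
    have hlogle : ((1-θ)/2) * Real.log Sr ≤ θ * Real.log c + (1/p) * Real.log S := by
      have h1 := Real.log_le_log (Real.rpow_pos_of_pos hSrpos _) hrt2
      rw [Real.log_rpow hSrpos, Real.log_mul (Real.rpow_pos_of_pos hc _).ne' hNpos.ne',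
        Real.log_rpow hc, hNdef, Real.log_rpow hSpos] at h1
      exact h1
    have hjen := jensen_log_rpow r hrnn hy2 α hα1
    rw [← hSrdef] at hjen
    have hHrval : ∑ a, r a * Real.log (r a) = -Hr := by
      rw [hHr, ← Finset.sum_neg_distrib]
      exact Finset.sum_congr rfl fun a _ => by rw [Real.negMulLog]; ring
    rw [hHrval] at hjen
    -- combine
    have hcoef : ((1-θ)/2) * (α - 1) = θ/2 := by
      rw [hαval]
      field_simp
      try ring
    have hstep : (θ/2) * (-Hr) ≤ θ * Real.log c + (1/p) * Real.log S := by
      have h1 : ((1-θ)/2) * ((α - 1) * (-Hr)) ≤ ((1-θ)/2) * Real.log Sr :=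
        mul_le_mul_of_nonneg_left hjen (div_nonneg (by linarith) (by norm_num))
      calc (θ/2) * (-Hr) = ((1-θ)/2) * ((α - 1) * (-Hr)) := by
            rw [← mul_assoc, hcoef]
        _ ≤ ((1-θ)/2) * Real.log Sr := h1
        _ ≤ θ * Real.log c + (1/p) * Real.log S := hlogle
    have hSw : S = ∑ b, w b ^ β := hSdef
    have hfrac : (1/p) * Real.log S = (θ/2) * (Real.log S / (1-β)) := by
      rw [hpβ, hθdef]
      have hβne : β ≠ 0 := hβ0.ne'
      have h1βne : (1:ℝ) - β ≠ 0 := by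
        intro h
        have : β = 1 := by linarith
        exact (ne_of_lt hβu) this
      field_simp
    rw [hfrac] at hstep
    -- divide by θ/2 > 0
    have hθne : θ ≠ 0 := hθ0.ne'
    have h3 := mul_le_mul_of_nonneg_left hstep (show (0:ℝ) ≤ 2/θ by positivity)
    have e1 : (2/θ) * ((θ/2)*(-Hr)) = -Hr := by field_simp
    have hcancel : ∀ u : ℝ, 2/θ * (θ/2 * u) = u := by
      intro u; field_simp
    have h21 : 2/θ * (θ * Real.log c) = 2 * Real.log c := by
      field_simp
    have e2 : (2/θ) * (θ*Real.log c + (θ/2)*(Real.log S/(1-β)))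
        = 2*Real.log c + Real.log S/(1-β) := by
      rw [mul_add, h21, hcancel]
    rw [e1, e2] at h3
    linarith
  -- pass to the limit β → 1⁻
  have hlim := tendsto_log_sum_rpow w hwnn hx
  have hev : ∀ᶠ β in nhdsWithin (1:ℝ) (Set.Iio 1),
      -Hr - 2 * Real.log c ≤ Real.log (∑ b, w b ^ β) / (1 - β) := by
    filter_upwards [Ioo_mem_nhdsLT_of_mem
      (show (1:ℝ) ∈ Set.Ioc (1/2 : ℝ) 1 by constructor <;> norm_num)] with β hβ
    exact key β hβ
  have hfinal : -Hr - 2 * Real.log c ≤ ∑ b, Real.negMulLog (w b) :=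
    ge_of_tendsto hlim hev
  linarith

end MUBaux

open MUBaux Finset in
/-- If `U₁,…,U_m` (`m ≥ 2`) are unitaries on `ℂ^s` whose column bases are pairwise
mutually unbiased, then the product bases `V_t = {U_t|k⟩ ⊗ U_t*|l⟩}` of `ℂ^{s²}` are
pairwise mutually unbiased, and the minimum over unit vectors `ψ` of the average
entropy `(1/m) ∑_t H(V_t, ψ)` equals `(log d)/2` with `d = s²`. -/
theorem product_mub_tight_uncertainty (s m : ℕ) (hs : 0 < s) (hm : 2 ≤ m)
    (U : Fin m → Matrix (Fin s) (Fin s) ℂ)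
    (hU : ∀ t, U t ∈ Matrix.unitaryGroup (Fin s) ℂ)
    (hmub : ∀ t t', t ≠ t' → ∀ k l,
      ‖ip (fun i => U t i k) (fun i => U t' i l)‖ = 1 / Real.sqrt s) :
    (∀ t t', t ≠ t' → ∀ kl kl',
      ‖ip (prodMUB (U t) kl) (prodMUB (U t') kl')‖ = 1 / Real.sqrt ((s : ℝ) ^ 2)) ∧
    IsLeast {x : ℝ | ∃ ψ : Fin s × Fin s → ℂ, (∑ p, ‖ψ p‖ ^ 2 = 1) ∧
        x = (1 / (m : ℝ)) * ∑ t, shannonH (prodMUB (U t)) ψ}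
      (Real.log ((s : ℝ) ^ 2) / 2) := by
  have hsR : (0:ℝ) < s := by exact_mod_cast hs
  have hsqrt : Real.sqrt ((s:ℝ)^2) = s := by
    rw [Real.sqrt_sq hsR.le]
  have hmR : (0:ℝ) < m := by positivity
  -- Part 1
  have part1 : ∀ t t', t ≠ t' → ∀ kl kl',
      ‖ip (prodMUB (U t) kl) (prodMUB (U t') kl')‖ = 1 / Real.sqrt ((s : ℝ) ^ 2) := by
    intro t t' htt' kl kl'
    rw [ip_prodMUB]
    have e1 : (∑ i, (starRingEnd ℂ) (U t i kl.1) * U t' i kl'.1)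
        = ip (fun i => U t i kl.1) (fun i => U t' i kl'.1) := rfl
    have e2 : (∑ i, (starRingEnd ℂ) (U t i kl.2) * U t' i kl'.2)
        = ip (fun i => U t i kl.2) (fun i => U t' i kl'.2) := rfl
    rw [norm_mul, RingHomIsometric.norm_map, e1, e2, hmub t t' htt', hmub t t' htt', hsqrt]
    rw [div_mul_div_comm, one_mul, Real.mul_self_sqrt hsR.le]
  refine ⟨part1, ?_, ?_⟩
  · -- membership: maximally entangled state
    set ψ₀ : Fin s × Fin s → ℂ :=
      fun p => ((if p.1 = p.2 then (Real.sqrt s)⁻¹ else 0 : ℝ) : ℂ) with hψ₀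
    have hsqs : ((Real.sqrt s)⁻¹)^2 = (s:ℝ)⁻¹ := by
      rw [← Real.sqrt_inv]
      exact Real.sq_sqrt (by positivity)
    refine ⟨ψ₀, ?_, ?_⟩
    · rw [Fintype.sum_prod_type]
      have : ∀ p1 : Fin s, ∑ p2 : Fin s, ‖ψ₀ (p1, p2)‖^2
          = (s:ℝ)⁻¹ := by
        intro p1
        rw [Finset.sum_eq_single p1]
        · simp [hψ₀, abs_of_nonneg (by positivity : (0:ℝ) ≤ (Real.sqrt s)⁻¹), hsqs]
        · intro b _ hb; simp [hψ₀, Ne.symm hb]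
        · simp
      rw [Finset.sum_congr rfl fun p1 _ => this p1, Finset.sum_const, Finset.card_univ,
        Fintype.card_fin, nsmul_eq_mul]
      field_simp
    · -- value is log s
      have hipval : ∀ t (kl : Fin s × Fin s), ip (prodMUB (U t) kl) ψ₀
          = ((Real.sqrt s)⁻¹ : ℂ) * (if kl.1 = kl.2 then 1 else 0) := by
        intro t kl
        rw [ip, Fintype.sum_prod_type]
        have hout : ∀ p1 : Fin s, (∑ p2, (starRingEnd ℂ) (prodMUB (U t) kl (p1, p2)) * ψ₀ (p1, p2))
            = (starRingEnd ℂ) (U t p1 kl.1) * U t p1 kl.2 * ((Real.sqrt s)⁻¹ : ℂ) := by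
          intro p1
          rw [Finset.sum_eq_single p1]
          · simp [hψ₀, prodMUB]; try ring
          · intro b _ hb; simp [hψ₀, Ne.symm hb]
          · simp
        rw [Finset.sum_congr rfl fun p1 _ => hout p1, ← Finset.sum_mul, unitary_col (hU t)]
        ring
      have hH : ∀ t, shannonH (prodMUB (U t)) ψ₀ = Real.log s := by
        intro t
        rw [shannonH]
        have hterm : ∀ kl : Fin s × Fin s, ‖ip (prodMUB (U t) kl) ψ₀‖^2
            = if kl.1 = kl.2 then (s:ℝ)⁻¹ else 0 := by
          intro kl
          rw [hipval t kl]
          by_cases h : kl.1 = kl.2 <;>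
            simp [h, abs_of_nonneg (by positivity : (0:ℝ) ≤ (Real.sqrt s)⁻¹), hsqs]
        rw [Finset.sum_congr rfl fun kl _ => by rw [hterm kl]]
        rw [Fintype.sum_prod_type]
        have : ∀ p1 : Fin s, ∑ p2 : Fin s,
            Real.negMulLog (if p1 = p2 then (s:ℝ)⁻¹ else 0) = Real.negMulLog (s:ℝ)⁻¹ := by
          intro p1
          rw [Finset.sum_eq_single p1]
          · simp
          · intro b _ hb; simp [Ne.symm hb, Real.negMulLog_zero]
          · simp
        rw [Finset.sum_congr rfl fun p1 _ => this p1]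
        simp only [Finset.sum_const, Finset.card_univ, Fintype.card_fin, nsmul_eq_mul]
        rw [Real.negMulLog, Real.log_inv]
        field_simp
      rw [Finset.sum_congr rfl fun t _ => hH t]
      simp only [Finset.sum_const, Finset.card_univ, Fintype.card_fin, nsmul_eq_mul]
      rw [Real.log_pow]
      push_cast
      field_simp
      try ring
  · -- lower bound
    rintro xval ⟨ψ, hψ, rfl⟩
    have hlogs : Real.log ((s:ℝ)^2) / 2 = Real.log s := by
      rw [Real.log_pow]; push_cast; ring
    rw [hlogs]
    have : Nonempty (Fin s) := ⟨⟨0, hs⟩⟩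
    have key : 0 ≤ ∑ t, (shannonH (prodMUB (U t)) ψ - Real.log s) := by
      apply sum_pair_nonneg hm
      intro t t' htt'
      have hcomp := fun p p' => prod_complete (hU t) p p'
      have hcomp' := fun p p' => prod_complete (hU t') p p'
      set M : (Fin s × Fin s) → (Fin s × Fin s) → ℂ :=
        fun a b => ip (prodMUB (U t') a) (prodMUB (U t) b) with hM
      set x : (Fin s × Fin s) → ℂ := fun b => ip (prodMUB (U t) b) ψ with hxdef
      have hcol : ∀ b b', ∑ a, (starRingEnd ℂ) (M a b) * M a b'
          = if b = b' then 1 else 0 := by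
        intro b b'
        have : ∀ a, (starRingEnd ℂ) (M a b) * M a b'
            = ip (prodMUB (U t) b) (prodMUB (U t') a) * ip (prodMUB (U t') a) (prodMUB (U t) b') := by
          intro a; rw [hM, conj_ip]
        rw [Finset.sum_congr rfl fun a _ => this a,
          ip_expansion _ hcomp', ip_prod_self (hU t)]
      have hMc : ∀ a b, ‖M a b‖ ≤ (s:ℝ)⁻¹ := by
        intro a b
        rw [hM]
        rw [part1 t' t (Ne.symm htt') a b, hsqrt]
        rw [one_div]
      have hx : ∑ b, ‖x b‖ ^ 2 = 1 := by
        rw [hxdef]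
        have := parseval (prodMUB (U t)) hcomp ψ
        rw [this, hψ]
      have hMx : ∀ a, (∑ b, M a b * x b) = ip (prodMUB (U t') a) ψ :=
        fun a => ip_expansion _ hcomp _ ψ
      have := entropy_pair M ((s:ℝ)⁻¹) (by positivity) hcol hMc x hx
      simp only [hMx] at this
      rw [Real.log_inv] at this
      have ht1 : shannonH (prodMUB (U t)) ψ = ∑ b, Real.negMulLog (‖x b‖ ^ 2) := rfl
      have ht2 : shannonH (prodMUB (U t')) ψ
          = ∑ a, Real.negMulLog (‖ip (prodMUB (U t') a) ψ‖ ^ 2) := rfl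
      rw [ht1, ht2]
      linarith
    rw [Finset.sum_sub_distrib] at key
    simp only [Finset.sum_const, Finset.card_univ, Fintype.card_fin, nsmul_eq_mul] at key
    rw [← sub_nonneg]
    have heq : (1 / (m:ℝ)) * ∑ t, shannonH (prodMUB (U t)) ψ - Real.log s
        = (1/(m:ℝ)) * (∑ t, shannonH (prodMUB (U t)) ψ - m * Real.log s) := by
      field_simp
    rw [heq]
    exact mul_nonneg (by positivity) key
end
end

section
/- Let B₁,…,B_{d+1} be a full set of d+1 pairwise mutually unbiased bases of ℂ^d (whose union of basis vectors forms a 2-design). Then for every unit vector ψ, the average collision entropy satisfies (1/(d+1)) ∑_{t=1}^{d+1} H₂(B_t, ψ) ≥ log((d+1)/2). -/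
open scoped BigOperators
open Matrix

noncomputable section

/-- Collision (Rényi order-2) entropy of measuring `ψ` in the basis `B`. -/
def collisionH {ι κ : Type*} [Fintype ι] [Fintype κ] (B : κ → ι → ℂ) (ψ : ι → ℂ) : ℝ :=
  - Real.log (∑ k, ‖ip (B k) ψ‖ ^ 4)

/-- Orthonormal family of `d` vectors in `ℂ^d`: ψ unit vector has a nonzero coeff. -/
lemma parseval_pos (d : ℕ) (b : Fin d → Fin d → ℂ)
    (horth : ∀ k l, ip (b k) (b l) = if k = l then 1 else 0)
    (ψ : Fin d → ℂ) (hψ : ∑ x, ‖ψ x‖ ^ 2 = 1) :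
    0 < ∑ k, ‖ip (b k) ψ‖ ^ 4 := by
  by_contra h
  push_neg at h
  have hz : ∀ k, ip (b k) ψ = 0 := by
    intro k
    have hle : ∑ k, ‖ip (b k) ψ‖ ^ 4 = 0 :=
      le_antisymm h (Finset.sum_nonneg fun _ _ => by positivity)
    have := (Finset.sum_eq_zero_iff_of_nonneg (fun i _ => by positivity)).1 hle k
      (Finset.mem_univ k)
    have h4 : ‖ip (b k) ψ‖ = 0 := by
      have := pow_eq_zero_iff (n := 4) (by norm_num) |>.1 this
      exact this
    simpa using h4
  -- matrix argument: ψ = 0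
  set M : Matrix (Fin d) (Fin d) ℂ := fun k i => (starRingEnd ℂ) (b k i) with hM
  have hMM : M * Mᴴ = 1 := by
    ext k l
    simp only [Matrix.mul_apply, Matrix.conjTranspose_apply, hM, Matrix.one_apply]
    change ∑ j, (starRingEnd ℂ) (b k j) * star ((starRingEnd ℂ) (b l j)) = _
    simpa [ip, map_sum, Complex.star_def] using horth k l
  have hMM' : Mᴴ * M = 1 := mul_eq_one_comm.1 hMM
  have hMv : M.mulVec ψ = 0 := by
    ext k
    simpa [Matrix.mulVec, dotProduct, hM, ip] using hz k
  have hψ0 : ψ = 0 := by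
    have : (Mᴴ * M).mulVec ψ = Mᴴ.mulVec (M.mulVec ψ) := (Matrix.mulVec_mulVec _ _ _).symm
    rw [hMM', Matrix.one_mulVec, hMv] at this
    simpa [Matrix.mulVec_zero] using this
  rw [hψ0] at hψ
  simp at hψ

/-- For a full set of `d+1` pairwise mutually unbiased bases of `ℂ^d` whose vectors
form a spherical 2-design, the average collision entropy of any unit vector `ψ` is at
least `log ((d+1)/2)`. -/
theorem full_mub_collision_entropy (d : ℕ) (hd : 0 < d)
    (B : Fin (d + 1) → Fin d → (Fin d → ℂ))
    (horth : ∀ t, ∀ k l, ip (B t k) (B t l) = if k = l then 1 else 0)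
    (hmub : ∀ t t', t ≠ t' → ∀ k l, ‖ip (B t k) (B t' l)‖ = 1 / Real.sqrt d)
    (hdesign : ∀ φ : Fin d → ℂ, (∑ x, ‖φ x‖ ^ 2 = 1) →
      (1 / ((d : ℝ) * (d + 1))) * ∑ t, ∑ k, ‖ip (B t k) φ‖ ^ 4 = 2 / ((d : ℝ) * (d + 1)))
    (ψ : Fin d → ℂ) (hψ : ∑ x, ‖ψ x‖ ^ 2 = 1) :
    (1 / ((d : ℝ) + 1)) * ∑ t, collisionH (B t) ψ ≥ Real.log (((d : ℝ) + 1) / 2) := by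
  set p : Fin (d + 1) → ℝ := fun t => ∑ k, ‖ip (B t k) ψ‖ ^ 4 with hp
  have hdpos : (0 : ℝ) < d := by exact_mod_cast hd
  have hd1 : (0 : ℝ) < (d : ℝ) + 1 := by linarith
  have hsum : ∑ t, p t = 2 := by
    have h := hdesign ψ hψ
    have hne : (d : ℝ) * ((d : ℝ) + 1) ≠ 0 := by positivity
    calc ∑ t, p t
        = ((d:ℝ)*((d:ℝ)+1)) * ((1/((d:ℝ)*((d:ℝ)+1))) * ∑ t, ∑ k, ‖ip (B t k) ψ‖^4) := by
          rw [hp]; field_simp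
      _ = ((d:ℝ)*((d:ℝ)+1)) * (2/((d:ℝ)*((d:ℝ)+1))) := by rw [h]
      _ = 2 := by field_simp
  have hpos : ∀ t, 0 < p t := fun t => parseval_pos d (B t) (horth t) ψ hψ
  -- Jensen
  have hw : ∑ t : Fin (d + 1), (1 / ((d : ℝ) + 1)) = 1 := by
    simp [Finset.sum_const]
    field_simp
  have hjensen :
      ∑ t, (1 / ((d : ℝ) + 1)) • Real.log (p t) ≤
        Real.log (∑ t, (1 / ((d : ℝ) + 1)) • p t) := by
    apply (strictConcaveOn_log_Ioi.concaveOn).le_map_sum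
    · intro t _; positivity
    · exact hw
    · intro t _; exact hpos t
  have hsum' : ∑ t, (1 / ((d : ℝ) + 1)) • p t = 2 / ((d : ℝ) + 1) := by
    rw [← Finset.smul_sum, hsum]
    simp [smul_eq_mul]
    ring
  rw [hsum'] at hjensen
  have hcoll : (1 / ((d : ℝ) + 1)) * ∑ t, collisionH (B t) ψ =
      -∑ t, (1 / ((d : ℝ) + 1)) • Real.log (p t) := by
    simp only [collisionH, smul_eq_mul, hp]
    rw [← Finset.sum_neg_distrib, Finset.mul_sum]
    congr 1; ext t; ring
  rw [hcoll, ge_iff_le]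
  have hlog : Real.log (((d : ℝ) + 1) / 2) = -Real.log (2 / ((d : ℝ) + 1)) := by
    rw [← Real.log_inv]
    congr 1
    field_simp
  rw [hlog]
  linarith [hjensen]
end
end

section
/- Let B₁,…,B_{d+1} be a full set of d+1 pairwise mutually unbiased bases of ℂ^d whose union forms a 2-design. Then for every unit vector ψ, (1/(d+1)) ∑_{t=1}^{d+1} H(B_t, ψ) ≥ log((d+1)/2), where H is the Shannon entropy of the outcome distribution. -/
open scoped BigOperators

noncomputable section

/-- Jensen's inequality for `Real.log`. -/
lemma jensen_log {ι : Type*} (t : Finset ι) (w x : ι → ℝ)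
    (h0 : ∀ i ∈ t, 0 ≤ w i) (h1 : ∑ i ∈ t, w i = 1) (hx : ∀ i ∈ t, 0 < x i) :
    ∑ i ∈ t, w i * Real.log (x i) ≤ Real.log (∑ i ∈ t, w i * x i) := by
  have := strictConcaveOn_log_Ioi.concaveOn.le_map_sum (t := t) (w := w) (p := x)
    h0 h1 (fun i hi => hx i hi)
  simpa [smul_eq_mul] using this

/-- `conj z * z` as a real square. -/
lemma conj_mul_self_eq (z : ℂ) : (starRingEnd ℂ) z * z = (((‖z‖ : ℝ) ^ 2 : ℝ) : ℂ) := by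
  rw [mul_comm, Complex.mul_conj, Complex.normSq_eq_norm_sq]

/-- Parseval for an orthonormal family of `d` vectors in `ℂ^d`. -/
lemma parseval (d : ℕ) (hd : 0 < d) (b : Fin d → Fin d → ℂ)
    (horth : ∀ k l, ip (b k) (b l) = if k = l then 1 else 0)
    (ψ : Fin d → ℂ) (hψ : ∑ x, ‖ψ x‖ ^ 2 = 1) :
    ∑ k, ‖ip (b k) ψ‖ ^ 2 = 1 := by
  haveI : Nonempty (Fin d) := ⟨⟨0, hd⟩⟩
  set E := EuclideanSpace ℂ (Fin d)
  let v : Fin d → E := fun k => (WithLp.equiv 2 _).symm (b k)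
  let ψ' : E := (WithLp.equiv 2 _).symm ψ
  have hip : ∀ (φ χ : Fin d → ℂ),
      (inner ℂ ((WithLp.equiv 2 _).symm φ) ((WithLp.equiv 2 _).symm χ) : ℂ) = ip φ χ := by
    intro φ χ
    simp [PiLp.inner_apply, ip, RCLike.inner_apply, WithLp.equiv_symm_apply, PiLp.toLp_apply, mul_comm]
  have hv : Orthonormal ℂ v := by
    rw [orthonormal_iff_ite]
    intro i j
    exact (hip (b i) (b j)).trans (horth i j)
  have hcard : Fintype.card (Fin d) = Module.finrank ℂ E := by
    simp [E]
  let bas : Module.Basis (Fin d) ℂ E := basisOfOrthonormalOfCardEqFinrank hv hcard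
  have hbas : ⇑bas = v := coe_basisOfOrthonormalOfCardEqFinrank hv hcard
  let ob : OrthonormalBasis (Fin d) ℂ E := bas.toOrthonormalBasis (by rwa [hbas])
  have hob : ∀ k, ob k = v k := by
    intro k
    rw [Module.Basis.coe_toOrthonormalBasis, hbas]
  have key := ob.sum_inner_mul_inner ψ' ψ'
  have h2 : ∀ k, (inner ℂ (ob k) ψ' : ℂ) = ip (b k) ψ := by
    intro k
    rw [hob k]
    exact hip (b k) ψ
  have hnorm : ∀ k, (inner ℂ ψ' (ob k) : ℂ) * inner ℂ (ob k) ψ'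
      = ((‖ip (b k) ψ‖ ^ 2 : ℝ) : ℂ) := by
    intro k
    rw [← inner_conj_symm ψ' (ob k), h2 k]
    exact conj_mul_self_eq _
  have hψn : (inner ℂ ψ' ψ' : ℂ) = 1 := by
    rw [hip ψ ψ]
    unfold ip
    have hterm : ∀ i, (starRingEnd ℂ) (ψ i) * ψ i = ((‖ψ i‖ ^ 2 : ℝ) : ℂ) :=
      fun i => conj_mul_self_eq _
    rw [Finset.sum_congr rfl (fun i _ => hterm i), ← Complex.ofReal_sum, hψ]
    norm_num
  rw [hψn] at key
  have hkey2 : ((∑ k, ‖ip (b k) ψ‖ ^ 2 : ℝ) : ℂ) = 1 := by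
    rw [Complex.ofReal_sum, ← key]
    exact Finset.sum_congr rfl (fun k _ => (hnorm k).symm)
  exact_mod_cast hkey2

/-- Shannon entropy is at least collision entropy for a probability vector. -/
lemma shannon_ge_collision {n : ℕ} (p : Fin n → ℝ) (hp : ∀ k, 0 ≤ p k)
    (hs : ∑ k, p k = 1) :
    - Real.log (∑ k, (p k) ^ 2) ≤ ∑ k, Real.negMulLog (p k) := by
  classical
  set S : Finset (Fin n) := Finset.univ.filter (fun k => p k ≠ 0) with hS
  have hsum : ∑ k ∈ S, p k = 1 := by
    rw [← hs]
    exact Finset.sum_filter_ne_zero _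
  have hpos : ∀ k ∈ S, 0 < p k := by
    intro k hk
    rcases (hp k).lt_or_eq with h | h
    · exact h
    · exact absurd h.symm (by simpa [hS] using hk)
  have hsq : ∑ k ∈ S, p k * p k = ∑ k, (p k) ^ 2 := by
    rw [Finset.sum_filter_of_ne]
    · exact Finset.sum_congr rfl (fun k _ => (sq (p k)).symm)
    · intro k _ h
      intro h0
      rw [h0] at h
      simp at h
  have hj := jensen_log S p p (fun k _ => hp k) hsum hpos
  rw [hsq] at hj
  have hent : ∑ k, Real.negMulLog (p k) = -(∑ k ∈ S, p k * Real.log (p k)) := by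
    rw [← Finset.sum_filter_of_ne (p := fun k => p k ≠ 0)]
    · rw [← Finset.sum_neg_distrib]
      exact Finset.sum_congr rfl (fun k _ => by simp [Real.negMulLog])
    · intro k _ h h0
      rw [h0] at h
      simp [Real.negMulLog] at h
  rw [hent]
  linarith

/-- For a full set of `d+1` pairwise mutually unbiased bases of `ℂ^d` whose vectors
form a spherical 2-design, the average Shannon entropy of any unit vector `ψ` is at
least `log ((d+1)/2)`. -/
theorem full_mub_shannon_entropy (d : ℕ) (hd : 0 < d)
    (B : Fin (d + 1) → Fin d → (Fin d → ℂ))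
    (horth : ∀ t, ∀ k l, ip (B t k) (B t l) = if k = l then 1 else 0)
    (hmub : ∀ t t', t ≠ t' → ∀ k l, ‖ip (B t k) (B t' l)‖ = 1 / Real.sqrt d)
    (hdesign : ∀ φ : Fin d → ℂ, (∑ x, ‖φ x‖ ^ 2 = 1) →
      (1 / ((d : ℝ) * (d + 1))) * ∑ t, ∑ k, ‖ip (B t k) φ‖ ^ 4 = 2 / ((d : ℝ) * (d + 1)))
    (ψ : Fin d → ℂ) (hψ : ∑ x, ‖ψ x‖ ^ 2 = 1) :
    (1 / ((d : ℝ) + 1)) * ∑ t, shannonH (B t) ψ ≥ Real.log (((d : ℝ) + 1) / 2) := by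
  classical
  set p : Fin (d + 1) → Fin d → ℝ := fun t k => ‖ip (B t k) ψ‖ ^ 2 with hp
  have hpnn : ∀ t k, 0 ≤ p t k := fun t k => by positivity
  have hpsum : ∀ t, ∑ k, p t k = 1 := fun t => parseval d hd (B t) (horth t) ψ hψ
  set s : Fin (d + 1) → ℝ := fun t => ∑ k, (p t k) ^ 2 with hsdef
  -- s t positive
  have hspos : ∀ t, 0 < s t := by
    intro t
    have h1 : (0 : ℝ) < ∑ k, p t k := by rw [hpsum t]; norm_num
    have : ∃ k, 0 < p t k := by
      by_contra h
      push_neg at h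
      have : ∑ k, p t k ≤ 0 := Finset.sum_nonpos (fun k _ => h k)
      linarith
    obtain ⟨k, hk⟩ := this
    have : (0:ℝ) < (p t k) ^ 2 := by positivity
    calc (0:ℝ) < (p t k)^2 := this
      _ ≤ s t := Finset.single_le_sum (f := fun i => (p t i) ^ 2)
            (fun i _ => by positivity) (Finset.mem_univ k)
  -- sum of s is 2 from the design property
  have hs2 : ∑ t, s t = 2 := by
    have h := hdesign ψ hψ
    have hdd : (0:ℝ) < (d : ℝ) * (d + 1) := by positivity
    have heq : ∑ t, ∑ k, ‖ip (B t k) ψ‖ ^ 4 = 2 := by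
      rw [one_div, inv_mul_eq_div, div_eq_div_iff hdd.ne' hdd.ne'] at h
      exact mul_right_cancel₀ hdd.ne' h
    rw [← heq]
    refine Finset.sum_congr rfl (fun t _ => Finset.sum_congr rfl (fun k _ => ?_))
    simp only [hp]
    ring
  -- Shannon ≥ collision for each t
  have hsh : ∀ t, - Real.log (s t) ≤ shannonH (B t) ψ := by
    intro t
    have := shannon_ge_collision (p t) (hpnn t) (hpsum t)
    simpa [shannonH, hsdef, hp] using this
  -- Jensen over t
  have hj := jensen_log (Finset.univ : Finset (Fin (d + 1)))
    (fun _ => 1 / ((d : ℝ) + 1)) s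
    (fun i _ => by positivity)
    (by
      simp only [Finset.sum_const, Finset.card_univ, Fintype.card_fin, nsmul_eq_mul]
      have : ((d : ℝ) + 1) ≠ 0 := by positivity
      push_cast
      field_simp)
    (fun i _ => hspos i)
  have hsum2 : ∑ _t : Fin (d+1), (1 / ((d : ℝ) + 1)) * s _t = 2 / ((d:ℝ) + 1) := by
    rw [← Finset.mul_sum, hs2]
    ring
  rw [hsum2] at hj
  have hlog : Real.log (2 / ((d:ℝ) + 1)) = - Real.log (((d:ℝ) + 1) / 2) := by
    rw [← Real.log_inv]
    congr 1
    field_simp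
  rw [hlog] at hj
  -- combine
  have hmono : ∑ t, (1 / ((d : ℝ) + 1)) * (- Real.log (s t))
      ≤ ∑ t, (1 / ((d : ℝ) + 1)) * shannonH (B t) ψ := by
    refine Finset.sum_le_sum (fun t _ => ?_)
    have h1 : (0:ℝ) ≤ 1 / ((d : ℝ) + 1) := by positivity
    exact mul_le_mul_of_nonneg_left (hsh t) h1
  have hneg : ∑ t, (1 / ((d : ℝ) + 1)) * (- Real.log (s t))
      = - ∑ t, (1 / ((d : ℝ) + 1)) * Real.log (s t) := by
    rw [← Finset.sum_neg_distrib]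
    exact Finset.sum_congr rfl (fun t _ => by ring)
  rw [ge_iff_le, Finset.mul_sum]
  calc Real.log (((d:ℝ) + 1) / 2)
      ≤ ∑ t, (1 / ((d : ℝ) + 1)) * (- Real.log (s t)) := by
        rw [hneg]; linarith
    _ ≤ ∑ t, (1 / ((d : ℝ) + 1)) * shannonH (B t) ψ := hmono
end
end

section
/- Let d = 2^n with n even, and let B₁, B₂, B₃ be the bases of (ℂ²)^{⊗n} obtained by applying I^{⊗n}, H^{⊗n}, and K^{⊗n} to the computational basis, where K = (I + iσ_x)/√2. For every tensor product |Γ_i⟩ of n/2 Bell states and every t ∈ {1,2,3}, the measurement entropy satisfies H(B_t, Γ_i) = n/2. -/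
open scoped BigOperators Matrix

noncomputable section

/-- The Bell basis vector `Γ_{ab}` of `ℂ² ⊗ ℂ²`. -/
def bell : Fin 2 × Fin 2 → (Fin 2 × Fin 2 → ℂ) :=
  fun ab xy =>
    if xy.2 = xy.1 + ab.1 then ((-1 : ℂ)) ^ ((ab.2 : ℕ) * (xy.1 : ℕ)) / (Real.sqrt 2 : ℂ)
    else 0

/-- The Hadamard matrix `H = (1/√2)[[1,1],[1,-1]]`. -/
def Hmat : Matrix (Fin 2) (Fin 2) ℂ :=
  ((Real.sqrt 2 : ℂ))⁻¹ • !![1, 1; 1, -1]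

/-- The matrix `K = (I + iσₓ)/√2 = (1/√2)[[1,i],[i,1]]`. -/
def Kmat : Matrix (Fin 2) (Fin 2) ℂ :=
  ((Real.sqrt 2 : ℂ))⁻¹ • !![1, Complex.I; Complex.I, 1]

/-- The three single-qubit unitaries `I`, `H`, `K` generating the three MUBs. -/
def mubGen : Fin 3 → Matrix (Fin 2) (Fin 2) ℂ :=
  ![1, Hmat, Kmat]

/-- The basis of `(ℂ²)^{⊗n}` (with `n = 2m` qubits grouped into `m` pairs) obtained
by applying `M_t^{⊗n}` to the computational basis. -/
def tensorBasis (m : ℕ) (t : Fin 3) :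
    (Fin m → Fin 2 × Fin 2) → ((Fin m → Fin 2 × Fin 2) → ℂ) :=
  fun k x => ∏ j, (mubGen t (x j).1 (k j).1 * mubGen t (x j).2 (k j).2)

/-- The tensor product of `m = n/2` Bell states, indexed by `i`. -/
def bellProduct (m : ℕ) (i : Fin m → Fin 2 × Fin 2) :
    (Fin m → Fin 2 × Fin 2) → ℂ :=
  fun x => ∏ j, bell (i j) (x j)


/-- The single-pair inner product between a MUB basis vector and a Bell state. -/
def pairIp (t : Fin 3) (a k : Fin 2 × Fin 2) : ℂ :=
  ∑ xy : Fin 2 × Fin 2, (starRingEnd ℂ) (mubGen t xy.1 k.1 * mubGen t xy.2 k.2) * bell a xy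

/-- The support condition: `pairIp t a k` is nonzero exactly when this holds. -/
def mubCond (t : Fin 3) (a k : Fin 2 × Fin 2) : Bool :=
  if t.val = 0 then k.2 = k.1 + a.1
  else if t.val = 1 then k.1 + k.2 = a.2
  else k.1 + k.2 = a.1 + a.2 + 1

set_option maxHeartbeats 2000000 in
lemma pair_normSq (t : Fin 3) (a k : Fin 2 × Fin 2) :
    ‖pairIp t a k‖ ^ 2 = if mubCond t a k then (1/2:ℝ) else 0 := by
  have hs : Real.sqrt 2 ^ 2 = 2 := Real.sq_sqrt (by norm_num)
  have h6 : Real.sqrt 2 ^ 6 = 8 := by rw [show Real.sqrt 2 ^ 6 = (Real.sqrt 2 ^ 2)^3 by ring, hs]; norm_num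
  have h4 : Real.sqrt 2 ^ 4 = 4 := by rw [show Real.sqrt 2 ^ 4 = (Real.sqrt 2 ^ 2)^2 by ring, hs]; norm_num
  have h3 : Real.sqrt 2 ^ 3 = 2 * Real.sqrt 2 := by rw [show Real.sqrt 2 ^ 3 = (Real.sqrt 2 ^ 2) * Real.sqrt 2 by ring, hs]
  have h5 : Real.sqrt 2 ^ 5 = 4 * Real.sqrt 2 := by rw [show Real.sqrt 2 ^ 5 = (Real.sqrt 2 ^ 2)^2 * Real.sqrt 2 by ring, hs]; norm_num
  have hpos : (0:ℝ) < Real.sqrt 2 := Real.sqrt_pos.mpr (by norm_num)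
  have hinv : (Real.sqrt 2)⁻¹ = Real.sqrt 2 / 2 := by
    rw [eq_div_iff (by norm_num : (2:ℝ) ≠ 0), inv_mul_eq_div, div_eq_iff hpos.ne']
    exact (Real.mul_self_sqrt (by norm_num)).symm
  fin_cases t <;> obtain ⟨a1, a2⟩ := a <;> fin_cases a1 <;> fin_cases a2 <;>
    obtain ⟨k1, k2⟩ := k <;> fin_cases k1 <;> fin_cases k2 <;>
  · simp only [pairIp, mubGen, Hmat, Kmat, bell, mubCond, Fintype.sum_prod_type, Fin.sum_univ_two,
      Matrix.smul_apply, Matrix.one_apply, Matrix.cons_val_zero, Matrix.cons_val_one,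
      Matrix.head_cons, Matrix.cons_val', Matrix.head_fin_const, Matrix.empty_val',
      smul_eq_mul, Fin.isValue, Fin.zero_eta, Fin.mk_one, (by decide : (1 + 1 : Fin 2) = 0), zero_add]
    norm_num [Complex.ext_iff, norm_div, norm_pow, Complex.sq_norm, Complex.normSq_apply,
      Complex.div_re, Complex.div_im]
    all_goals try (simp only [Fin.reduceEq, reduceIte]; norm_num [Complex.ext_iff])
    all_goals try first | ring1 | ((try ring_nf); norm_num [h6, h4, hs, inv_pow])
    all_goals try (rw [if_neg (by decide)])
    all_goals try ((try ring_nf); norm_num [h6, h4, h5, h3, hs, hinv]; try ring_nf; try norm_num [hs, h3])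
    all_goals decide

lemma card_mubCond (t : Fin 3) (a : Fin 2 × Fin 2) :
    (Finset.univ.filter (fun y => mubCond t a y = true)).card = 2 := by
  revert a; revert t; decide

lemma ip_factor (m : ℕ) (t : Fin 3) (i k : Fin m → Fin 2 × Fin 2) :
    ip (tensorBasis m t k) (bellProduct m i) = ∏ j, pairIp t (i j) (k j) := by
  simp only [ip, tensorBasis, bellProduct, pairIp]
  rw [Fintype.prod_sum]
  refine Finset.sum_congr rfl fun x _ => ?_
  rw [map_prod, ← Finset.prod_mul_distrib]

lemma negMulLog_half_pow (m : ℕ) :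
    Real.negMulLog ((1/2:ℝ)^m) = (1/2:ℝ)^m * ((m:ℝ) * Real.log 2) := by
  rw [Real.negMulLog, Real.log_pow, show Real.log (1/2) = - Real.log 2 by
    rw [one_div, Real.log_inv]]
  ring

/-- For `d = 2^n` with `n` even, the three MUBs generated by `I^{⊗n}`, `H^{⊗n}`,
`K^{⊗n}`, and any tensor product `Γ_i` of `n/2` Bell states, the measurement entropy
satisfies `H(B_t, Γ_i) = n/2` (i.e. `(n/2)·log 2` in natural units). -/
theorem bell_product_entropy (n m : ℕ) (hn : n = 2 * m) (t : Fin 3)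
    (i : Fin m → Fin 2 × Fin 2) :
    shannonH (tensorBasis m t) (bellProduct m i) = ((n : ℝ) / 2) * Real.log 2 := by
  classical
  have key : ∀ k : Fin m → Fin 2 × Fin 2,
      ‖ip (tensorBasis m t k) (bellProduct m i)‖ ^ 2
        = if (∀ j, mubCond t (i j) (k j) = true) then ((1:ℝ)/2)^m else 0 := by
    intro k
    rw [ip_factor, norm_prod, ← Finset.prod_pow]
    simp_rw [pair_normSq]
    rw [Fintype.prod_ite_zero]
    simp
  have hfilter : (Finset.univ.filter
      (fun k : Fin m → Fin 2 × Fin 2 => ∀ j, mubCond t (i j) (k j) = true))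
      = Fintype.piFinset (fun j => Finset.univ.filter (fun y => mubCond t (i j) y = true)) := by
    ext k; simp [Fintype.mem_piFinset]
  have hcard : (Finset.univ.filter
      (fun k : Fin m → Fin 2 × Fin 2 => ∀ j, mubCond t (i j) (k j) = true)).card = 2 ^ m := by
    rw [hfilter, Fintype.card_piFinset]
    simp [card_mubCond]
  rw [shannonH]
  simp_rw [key, apply_ite Real.negMulLog, Real.negMulLog_zero]
  rw [Finset.sum_ite, Finset.sum_const_zero, add_zero, Finset.sum_const, hcard,
    negMulLog_half_pow, nsmul_eq_mul]
  have : ((2:ℝ)^m) * ((1/2:ℝ)^m * ((m:ℝ) * Real.log 2)) = (m:ℝ) * Real.log 2 := by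
    rw [← mul_assoc, ← mul_pow]
    norm_num
  push_cast
  rw [this, hn]
  push_cast
  ring
end
end
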